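/- Upward closure of attacker winning budgets (Proposition 3): For every position g of a declining energy game and extended energies e ≤ e', if e ∈ Win_a(g) then e' ∈ Win_a(g). -/

import Mathlib

/-! ### Energies and energy updates -/

/-- (Finite) energies: vectors in `ℕ^N`. -/
abbrev Energy (N : ℕ) := Fin N → ℕ

/-- Extended energies: vectors in `(ℕ ∪ {∞})^N`. -/
abbrev EnergyE (N : ℕ) := Fin N → ℕ∞

/-- Embedding of energies into extended energies. -/
def Energy.toE {N : ℕ} (e : Energy N) : EnergyE N := fun k => (e k : ℕ∞)

/-- A component of an energy update: `-1`, `0`, or `min_D`. -/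
inductive UpdComp (N : ℕ) : Type where
  | dec : UpdComp N
  | zero : UpdComp N
  | minOf (D : Finset (Fin N)) : UpdComp N
deriving DecidableEq

/-- An energy update: a vector of update components, where a `min_D`
component at index `k` must satisfy `k ∈ D`. -/
structure EnergyUpdate (N : ℕ) : Type where
  comp : Fin N → UpdComp N
  valid : ∀ k D, comp k = UpdComp.minOf D → k ∈ D

open Classical in
/-- Applying an energy update to an extended energy: component `k` becomes
`e k - 1`, `e k`, or `min_{d ∈ D} e d`; the result is undefined (`none`) if
some component would become negative. -/
noncomputable def applyUpdE {N : ℕ} (e : EnergyE N) (u : EnergyUpdate N) :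
    Option (EnergyE N) :=
  if ∀ k, u.comp k = UpdComp.dec → e k ≠ 0 then
    some (fun k =>
      match u.comp k with
      | UpdComp.dec => e k - 1
      | UpdComp.zero => e k
      | UpdComp.minOf D => (insert k D).inf' (Finset.insert_nonempty k D) e)
  else none

open Classical in
/-- Applying an energy update to a (finite) energy. -/
noncomputable def applyUpdN {N : ℕ} (e : Energy N) (u : EnergyUpdate N) :
    Option (Energy N) :=
  if ∀ k, u.comp k = UpdComp.dec → e k ≠ 0 then
    some (fun k =>
      match u.comp k with
      | UpdComp.dec => e k - 1
      | UpdComp.zero => e k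
      | UpdComp.minOf D => (insert k D).inf' (Finset.insert_nonempty k D) e)
  else none

/-! ### Declining energy games -/

/-- A declining `N`-dimensional energy game: positions (partitioned into defender
positions and attacker positions), moves, and a weight function assigning an
energy update to each move. -/
structure EnergyGame (N : ℕ) where
  Pos : Type
  defender : Pos → Prop
  move : Pos → Pos → Prop
  weight : Pos → Pos → EnergyUpdate N

/-- The attacker wins from position `g` with (extended) initial energy budget `e`:
inductive (attractor) characterization of the existence of an attacker winning
strategy.  (The attacker wins exactly the finite plays that get stuck at a defender
position without the energy having become negative, so the attacker has a winning
strategy iff they can force the play into a stuck defender position in finitely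
many steps while keeping all energy levels defined.) -/
inductive AttackerWins {N : ℕ} (G : EnergyGame N) : G.Pos → EnergyE N → Prop where
  | attack {g g' : G.Pos} {e e' : EnergyE N} :
      ¬ G.defender g → G.move g g' →
      applyUpdE e (G.weight g g') = some e' →
      AttackerWins G g' e' → AttackerWins G g e
  | defend {g : G.Pos} {e : EnergyE N} :
      G.defender g →
      (∀ g', G.move g g' → (applyUpdE e (G.weight g g')).isSome) →
      (∀ g' e', G.move g g' → applyUpdE e (G.weight g g') = some e' →
        AttackerWins G g' e') →
      AttackerWins G g e

lemma applyUpdE_mono {N : ℕ} {e e' : EnergyE N} (hle : e ≤ e') (u : EnergyUpdate N)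
    {f : EnergyE N} (hf : applyUpdE e u = some f) :
    ∃ f', applyUpdE e' u = some f' ∧ f ≤ f' := by
  unfold applyUpdE at hf ⊢
  split at hf
  case isFalse => simp at hf
  case isTrue h0 =>
    have h0' : ∀ k, u.comp k = UpdComp.dec → e' k ≠ 0 := by
      intro k hk hz
      exact h0 k hk (le_antisymm (hz ▸ hle k) zero_le)
    rw [if_pos h0']
    refine ⟨_, rfl, ?_⟩
    simp only [Option.some.injEq] at hf
    subst hf
    intro k
    cases hc : u.comp k with
    | dec => simp only [hc]; exact tsub_le_tsub_right (hle k) 1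
    | zero => simp only [hc]; exact hle k
    | minOf D =>
      simp only [hc]
      apply Finset.le_inf'
      intro b hb
      exact le_trans (Finset.inf'_le _ hb) (hle b)

/-- **Upward closure of attacker winning budgets** (Proposition 3): if
`e ∈ Win_a(g)` and `e ≤ e'` then `e' ∈ Win_a(g)`. -/
theorem attackerWins_upward_closed {N : ℕ} (G : EnergyGame N) (g : G.Pos)
    (e e' : EnergyE N) (hle : e ≤ e') (h : AttackerWins G g e) :
    AttackerWins G g e' := by
  induction h generalizing e' with
  | attack hd hm hupd _ ih =>
    obtain ⟨f', hf', hlef⟩ := applyUpdE_mono hle _ hupd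
    exact AttackerWins.attack hd hm hf' (ih f' hlef)
  | defend hd hsome hall ih =>
    refine AttackerWins.defend hd ?_ ?_
    · intro g' hm
      obtain ⟨f, hf⟩ := Option.isSome_iff_exists.mp (hsome g' hm)
      obtain ⟨f', hf', _⟩ := applyUpdE_mono hle _ hf
      simp [hf']
    · intro g' f' hm hf'
      obtain ⟨f, hf⟩ := Option.isSome_iff_exists.mp (hsome g' hm)
      obtain ⟨f'', hf'', hlef⟩ := applyUpdE_mono hle _ hf
      rw [hf'] at hf''
      cases hf''
      exact ih g' f hm hf f' hlef
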